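/- arXiv:2407.16585 — 4 statements merged into one kernel-verified Lean document; each statement's English description precedes it below -/
import Mathlib

section
/- Shifting a fan preserves properness: let φ be a proper partial q-edge-coloring and F = (x, y_0, …, y_{k−1}) a fan, i.e., y_0, …, y_{k−1} are distinct neighbors of x, φ(x y_0) = blank, and for each 1 ≤ i < k the color φ(x y_i) is missing at y_{i−1}. Define ψ by setting ψ(x y_i) = φ(x y_{i+1}) for 0 ≤ i < k−1, ψ(x y_{k−1}) = blank, and ψ(e) = φ(e) for all other edges. Then ψ is a proper partial q-edge-coloring. -/
/-- A proper partial `q`-edge-coloring: colored edges sharing an endpoint get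
distinct colors. -/
def ProperPartial {V : Type*} (G : SimpleGraph V) {q : ℕ}
    (φ : Sym2 V → Option (Fin q)) : Prop :=
  ∀ e ∈ G.edgeSet, ∀ f ∈ G.edgeSet, e ≠ f → (∃ v, v ∈ e ∧ v ∈ f) →
    φ e ≠ none → φ e ≠ φ f

/-- The color `c` is missing at `v` under `φ`. -/
def MissingAt {V : Type*} (G : SimpleGraph V) {q : ℕ}
    (φ : Sym2 V → Option (Fin q)) (v : V) (c : Fin q) : Prop :=
  ∀ w, G.Adj v w → φ s(v, w) ≠ some c

/-!
Only the shifted fan edges change colour. The edge `x y_i` receives `c = φ(x y_{i+1})`, which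
`φ` uses at `x` only on `x y_{i+1}` and which is missing at `y_i`; two fan edges `x y_i`, `x y_j`
receive the colours of the distinct edges `x y_{i+1}`, `x y_{j+1}` at `x`, so they differ.
-/

section

variable {V : Type*} {G : SimpleGraph V} {q : ℕ} {φ ψ : Sym2 V → Option (Fin q)}

theorem ProperPartial.ne_some (hφ : ProperPartial G φ) {e f : Sym2 V} (he : e ∈ G.edgeSet)
    (hf : f ∈ G.edgeSet) (hef : e ≠ f) (hv : ∃ v, v ∈ e ∧ v ∈ f) {c : Fin q}
    (hc : φ e = some c) : φ f ≠ some c :=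
  fun hfc => hφ e he f hf hef hv (by simp [hc]) (hc.trans hfc.symm)

theorem properPartial_of_forall_ne_some
    (h : ∀ e ∈ G.edgeSet, ∀ f ∈ G.edgeSet, e ≠ f → (∃ v, v ∈ e ∧ v ∈ f) →
      ∀ c, φ e = some c → φ f ≠ some c) :
    ProperPartial G φ := by
  intro e he f hf hef hv hne hef_eq
  obtain ⟨c, hc⟩ := Option.ne_none_iff_exists'.mp hne
  exact h e he f hf hef hv c hc (hef_eq ▸ hc)

structure IsFanShift (G : SimpleGraph V) (φ ψ : Sym2 V → Option (Fin q)) (x : V) (k : ℕ)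
    (y : ℕ → V) : Prop where
  injective : ∀ i < k, ∀ j < k, y i = y j → i = j
  adj : ∀ i < k, G.Adj x (y i)
  color_missing : ∀ i, 1 ≤ i → i < k → ∃ c : Fin q,
    φ s(x, y i) = some c ∧ MissingAt G φ (y (i - 1)) c
  shift : ∀ i, i < k - 1 → ψ s(x, y i) = φ s(x, y (i + 1))
  last : ψ s(x, y (k - 1)) = none
  eq_of_not_fan : ∀ e : Sym2 V, (∀ i < k, e ≠ s(x, y i)) → ψ e = φ e

namespace IsFanShift

variable {x : V} {k : ℕ} {y : ℕ → V}

theorem of_eq_some (h : IsFanShift G φ ψ x k y) {i : ℕ} (hi : i < k) {c : Fin q}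
    (hc : ψ s(x, y i) = some c) :
    i + 1 < k ∧ φ s(x, y (i + 1)) = some c ∧ MissingAt G φ (y i) c := by
  have hik : i + 1 < k := by
    by_contra hik
    rw [show i = k - 1 by omega, h.last] at hc
    simp at hc
  obtain ⟨d, hd, hmiss⟩ := h.color_missing (i + 1) (by omega) hik
  rw [h.shift i (by omega), hd, Option.some_inj] at hc
  subst hc
  exact ⟨hik, hd, hmiss⟩

theorem ne_some_of_fan (h : IsFanShift G φ ψ x k y) (hφ : ProperPartial G φ) {i j : ℕ}
    (hi : i < k) (hj : j < k) (hij : i ≠ j) {c : Fin q} (hc : ψ s(x, y i) = some c) :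
    ψ s(x, y j) ≠ some c := by
  intro hjc
  obtain ⟨hi', hci, -⟩ := h.of_eq_some hi hc
  obtain ⟨hj', hcj, -⟩ := h.of_eq_some hj hjc
  have hne : s(x, y (i + 1)) ≠ s(x, y (j + 1)) := fun heq =>
    hij (by simpa using h.injective _ hi' _ hj' (Sym2.congr_right.mp heq))
  exact hφ.ne_some (h.adj _ hi') (h.adj _ hj') hne ⟨x, by simp, by simp⟩ hci hcj

theorem ne_some_of_not_fan (h : IsFanShift G φ ψ x k y) (hφ : ProperPartial G φ) {i : ℕ}
    (hi : i < k) {f : Sym2 V} (hf : f ∈ G.edgeSet) (hfF : ∀ j < k, f ≠ s(x, y j))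
    (hv : ∃ v, v ∈ s(x, y i) ∧ v ∈ f) {c : Fin q} (hc : ψ s(x, y i) = some c) :
    φ f ≠ some c := by
  obtain ⟨hi', hci, hmiss⟩ := h.of_eq_some hi hc
  obtain ⟨v, hv, hvf⟩ := hv
  rcases Sym2.mem_iff.mp hv with rfl | rfl
  · exact hφ.ne_some (h.adj _ hi') hf (hfF _ hi').symm ⟨v, by simp, hvf⟩ hci
  · obtain ⟨w, rfl⟩ := Sym2.mem_iff_exists.mp hvf
    exact hmiss w hf

theorem properPartial (h : IsFanShift G φ ψ x k y) (hφ : ProperPartial G φ) :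
    ProperPartial G ψ := by
  refine properPartial_of_forall_ne_some fun e he f hf hef hv c hc => ?_
  by_cases heF : ∃ i < k, e = s(x, y i)
  · obtain ⟨i, hi, rfl⟩ := heF
    by_cases hfF : ∃ j < k, f = s(x, y j)
    · obtain ⟨j, hj, rfl⟩ := hfF
      exact h.ne_some_of_fan hφ hi hj (fun hij => hef (hij ▸ rfl)) hc
    · push Not at hfF
      rw [h.eq_of_not_fan f hfF]
      exact h.ne_some_of_not_fan hφ hi hf hfF hv hc
  · push Not at heF
    rw [h.eq_of_not_fan e heF] at hc
    by_cases hfF : ∃ j < k, f = s(x, y j)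
    · obtain ⟨j, hj, rfl⟩ := hfF
      exact fun hfc => h.ne_some_of_not_fan hφ hj he heF (hv.imp fun _ => And.symm) hfc hc
    · push Not at hfF
      rw [h.eq_of_not_fan f hfF]
      exact hφ.ne_some he hf hef hv hc

end IsFanShift

end

theorem shift_fan_proper_general {V : Type*} (G : SimpleGraph V) (q : ℕ)
    (φ ψ : Sym2 V → Option (Fin q)) (hφ : ProperPartial G φ)
    (x : V) (k : ℕ) (y : ℕ → V)
    (hinj : ∀ i < k, ∀ j < k, y i = y j → i = j)
    (hadj : ∀ i < k, G.Adj x (y i))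
    (hfan : ∀ i, 1 ≤ i → i < k → ∃ c : Fin q,
      φ s(x, y i) = some c ∧ MissingAt G φ (y (i - 1)) c)
    (hψ₁ : ∀ i, i < k - 1 → ψ s(x, y i) = φ s(x, y (i + 1)))
    (hψ₂ : ψ s(x, y (k - 1)) = none)
    (hψ₃ : ∀ e : Sym2 V, (∀ i < k, e ≠ s(x, y i)) → ψ e = φ e) :
    ProperPartial G ψ :=
  (IsFanShift.mk hinj hadj hfan hψ₁ hψ₂ hψ₃).properPartial hφ

/-- shifting a fan preserves properness. -/
theorem shift_fan_proper {V : Type*} (G : SimpleGraph V) (q : ℕ)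
    (φ ψ : Sym2 V → Option (Fin q)) (hφ : ProperPartial G φ)
    (x : V) (k : ℕ) (hk : 0 < k) (y : ℕ → V)
    (hinj : ∀ i < k, ∀ j < k, y i = y j → i = j)
    (hadj : ∀ i < k, G.Adj x (y i))
    (hblank : φ s(x, y 0) = none)
    (hfan : ∀ i, 1 ≤ i → i < k → ∃ c : Fin q,
      φ s(x, y i) = some c ∧ MissingAt G φ (y (i - 1)) c)
    (hψ₁ : ∀ i, i < k - 1 → ψ s(x, y i) = φ s(x, y (i + 1)))
    (hψ₂ : ψ s(x, y (k - 1)) = none)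
    (hψ₃ : ∀ e : Sym2 V, (∀ i < k, e ≠ s(x, y i)) → ψ e = φ e) :
    ProperPartial G ψ :=
  shift_fan_proper_general G q φ ψ hφ x k y hinj hadj hfan hψ₁ hψ₂ hψ₃
end

section
/- Multiplicative Azuma inequality for supermartingale-like sums: let X_1, …, X_n be random variables taking values in [0, c] with E[X_i | X_1, …, X_{i−1}] ≤ a_i for each i, and let μ = a_1 + ⋯ + a_n. Then for every δ > 0, Pr[X_1 + ⋯ + X_n ≥ (1+δ)μ] ≤ exp(−δ²μ / ((2+δ)c)). -/
open MeasureTheory ProbabilityTheory Real Finset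

/-! Chernoff's method. On `[0, c]` the convex function `x ↦ exp (t x)` lies below its chord
`1 + (exp (t c) - 1) x / c`, so conditionally on the past each factor `exp (t X i)` has mean at most
`1 + (exp (t c) - 1) a i / c ≤ exp ((exp (t c) - 1) a i / c)`. Peeling off the last factor with the
pull-out property gives `E exp (t ∑ X i) ≤ exp ((exp (t c) - 1) μ / c)`, and Markov's inequality
with `exp (t c) = 1 + δ` bounds the probability by `exp (μ (δ - (1 + δ) log (1 + δ)) / c)`, which is
at most the claim because `log (1 + δ) ≥ 2δ / (2 + δ)`. -/

theorem Real.exp_mul_le_one_add_of_mem_Icc {c x : ℝ} (hc : 0 < c) (hx : x ∈ Set.Icc 0 c) (t : ℝ) :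
    exp (t * x) ≤ 1 + (exp (t * c) - 1) / c * x := by
  have h := convexOn_exp.2 (Set.mem_univ 0) (Set.mem_univ (t * c))
    (sub_nonneg.2 ((div_le_one hc).2 hx.2)) (div_nonneg hx.1 hc.le) (sub_add_cancel 1 _)
  simp only [smul_eq_mul, mul_zero, zero_add, exp_zero] at h
  calc exp (t * x) = exp (x / c * (t * c)) := by field_simp
    _ ≤ (1 - x / c) * 1 + x / c * exp (t * c) := h
    _ = 1 + (exp (t * c) - 1) / c * x := by ring

theorem Real.sub_mul_log_one_add_le {x : ℝ} (hx : 0 ≤ x) :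
    x - (1 + x) * log (1 + x) ≤ -(x ^ 2 / (2 + x)) := by
  have hlog := le_log_one_add_of_nonneg hx
  have h2x : 0 < x + 2 := by linarith
  rw [div_le_iff₀ h2x] at hlog
  rw [add_comm 2 x, le_neg, neg_sub, div_le_iff₀ h2x]
  nlinarith

section

variable {Ω : Type*} {m m0 : MeasurableSpace Ω} {μ : Measure Ω}

theorem condExp_le_const_add_mul_of_le [IsFiniteMeasure μ] (hm : m ≤ m0) {f g : Ω → ℝ}
    (hf : Integrable f μ) (hg : Integrable g μ) {α β b : ℝ} (hβ : 0 ≤ β)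
    (hfg : ∀ ω, f ω ≤ α + β * g ω) (hgb : ∀ᵐ ω ∂μ, μ[g | m] ω ≤ b) :
    ∀ᵐ ω ∂μ, μ[f | m] ω ≤ α + β * b := by
  have hmono := condExp_mono (m := m) hf ((integrable_const α).add (hg.smul β))
    (ae_of_all _ hfg)
  filter_upwards [hmono, condExp_add (integrable_const α) (hg.smul β) m,
    condExp_smul (μ := μ) β g m, hgb] with ω hmono hadd hsmul hgb
  rw [hadd, Pi.add_apply, condExp_const hm, hsmul] at hmono
  simp only [Pi.smul_apply, smul_eq_mul] at hmono
  nlinarith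

theorem integral_mul_le_of_condExp_le (hm : m ≤ m0) [SigmaFinite (μ.trim hm)] {g h : Ω → ℝ}
    (hgm : StronglyMeasurable[m] g) (hg0 : ∀ ω, 0 ≤ g ω) (hg : Integrable g μ)
    (hh : Integrable h μ) (hgh : Integrable (g * h) μ) {b : ℝ}
    (hb : ∀ᵐ ω ∂μ, μ[h | m] ω ≤ b) :
    ∫ ω, g ω * h ω ∂μ ≤ (∫ ω, g ω ∂μ) * b := by
  have hpull := condExp_mul_of_stronglyMeasurable_left hgm hgh hh
  calc ∫ ω, g ω * h ω ∂μ = ∫ ω, (μ[g * h | m]) ω ∂μ := (integral_condExp hm).symm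
    _ = ∫ ω, g ω * μ[h | m] ω ∂μ := integral_congr_ae hpull
    _ ≤ ∫ ω, g ω * b ∂μ := by
        refine integral_mono_ae (integrable_condExp.congr hpull) (hg.mul_const b) ?_
        filter_upwards [hb] with ω hω
        exact mul_le_mul_of_nonneg_left hω (hg0 ω)
    _ = (∫ ω, g ω ∂μ) * b := integral_mul_const b g

theorem integrable_prod_of_mem_Icc [IsFiniteMeasure μ] {ι : Type*} {Y : ι → Ω → ℝ} {C : ℝ}
    (hYm : ∀ i, Measurable (Y i)) (hY : ∀ i ω, Y i ω ∈ Set.Icc 0 C) (s : Finset ι) :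
    Integrable (fun ω ↦ ∏ i ∈ s, Y i ω) μ :=
  .of_mem_Icc 0 (C ^ #s) (Finset.measurable_prod s fun i _ ↦ hYm i).aemeasurable
    (ae_of_all _ fun ω ↦ ⟨prod_nonneg fun i _ ↦ (hY i ω).1,
      by simpa using prod_le_prod (s := s) (fun i _ ↦ (hY i ω).1) fun i _ ↦ (hY i ω).2⟩)

theorem integral_prod_le_prod_of_condExp_le [IsProbabilityMeasure μ] {F : ℕ → MeasurableSpace Ω}
    (hF : ∀ i, F i ≤ m0) {Y : ℕ → Ω → ℝ} {C : ℝ} (hYm : ∀ i, Measurable (Y i))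
    (hYF : ∀ i, ∀ j < i, Measurable[F i] (Y j)) (hY : ∀ i ω, Y i ω ∈ Set.Icc 0 C)
    {b : ℕ → ℝ} (hb0 : ∀ i, 0 ≤ b i) (n : ℕ)
    (hb : ∀ i < n, ∀ᵐ ω ∂μ, μ[Y i | F i] ω ≤ b i) :
    ∫ ω, ∏ i ∈ range n, Y i ω ∂μ ≤ ∏ i ∈ range n, b i := by
  induction n with
  | zero => simp
  | succ k ih =>
    simp only [prod_range_succ]
    calc ∫ ω, (∏ i ∈ range k, Y i ω) * Y k ω ∂μ
        ≤ (∫ ω, ∏ i ∈ range k, Y i ω ∂μ) * b k :=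
          integral_mul_le_of_condExp_le (hF k)
            (Finset.measurable_prod _ fun i hi ↦ hYF k i (mem_range.1 hi)).stronglyMeasurable
            (fun ω ↦ prod_nonneg fun i _ ↦ (hY i ω).1) (integrable_prod_of_mem_Icc hYm hY _)
            (.of_mem_Icc 0 C (hYm k).aemeasurable (ae_of_all _ (hY k)))
            (by simpa only [prod_range_succ, Pi.mul_def]
              using integrable_prod_of_mem_Icc hYm hY (range (k + 1)))
            (hb k k.lt_succ_self)
      _ ≤ (∏ i ∈ range k, b i) * b k :=
          mul_le_mul_of_nonneg_right (ih fun i hi ↦ hb i (hi.trans k.lt_succ_self)) (hb0 k)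

theorem measureReal_sum_ge_le_exp_of_condExp_le [IsProbabilityMeasure μ]
    {F : ℕ → MeasurableSpace Ω} (hF : ∀ i, F i ≤ m0) {X : ℕ → Ω → ℝ}
    (hXm : ∀ i, Measurable (X i)) (hXF : ∀ i, ∀ j < i, Measurable[F i] (X j)) {c : ℝ}
    (hc : 0 < c) (hX : ∀ i ω, X i ω ∈ Set.Icc 0 c) {a : ℕ → ℝ} (ha : ∀ i, 0 ≤ a i) {n : ℕ}
    (hcond : ∀ i < n, ∀ᵐ ω ∂μ, μ[X i | F i] ω ≤ a i) {t : ℝ} (ht : 0 ≤ t) (ε : ℝ) :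
    μ.real {ω | ε ≤ ∑ i ∈ range n, X i ω} ≤
      exp (-t * ε + (exp (t * c) - 1) / c * ∑ i ∈ range n, a i) := by
  set Y : ℕ → Ω → ℝ := fun i ω ↦ exp (t * X i ω)
  have hYm : ∀ i, Measurable (Y i) := fun i ↦ ((hXm i).const_mul t).exp
  have hY : ∀ i ω, Y i ω ∈ Set.Icc 0 (exp (t * c)) := fun i ω ↦
    ⟨(exp_pos _).le, exp_le_exp.2 (mul_le_mul_of_nonneg_left (hX i ω).2 ht)⟩
  have hsum : ∀ ω, exp (t * ∑ i ∈ range n, X i ω) = ∏ i ∈ range n, Y i ω := fun ω ↦ by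
    rw [mul_sum, exp_sum]
  have hslope : 0 ≤ (exp (t * c) - 1) / c :=
    div_nonneg (sub_nonneg.2 (one_le_exp (mul_nonneg ht hc.le))) hc.le
  have hmgf : mgf (fun ω ↦ ∑ i ∈ range n, X i ω) μ t ≤
      ∏ i ∈ range n, (1 + (exp (t * c) - 1) / c * a i) := by
    simp only [mgf, hsum]
    refine integral_prod_le_prod_of_condExp_le hF hYm
      (fun i j hj ↦ ((hXF i j hj).const_mul t).exp) hY
      (fun i ↦ add_nonneg zero_le_one (mul_nonneg hslope (ha i))) n fun i hi ↦ ?_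
    exact condExp_le_const_add_mul_of_le (hF i)
      (.of_mem_Icc _ _ (hYm i).aemeasurable (ae_of_all _ (hY i)))
      (.of_mem_Icc _ _ (hXm i).aemeasurable (ae_of_all _ (hX i))) hslope
      (fun ω ↦ exp_mul_le_one_add_of_mem_Icc hc (hX i ω) t) (hcond i hi)
  calc μ.real {ω | ε ≤ ∑ i ∈ range n, X i ω}
      ≤ exp (-t * ε) * mgf (fun ω ↦ ∑ i ∈ range n, X i ω) μ t :=
        measure_ge_le_exp_mul_mgf ε ht
          (by simpa only [hsum] using integrable_prod_of_mem_Icc hYm hY (range n))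
    _ ≤ exp (-t * ε) * exp (∑ i ∈ range n, (exp (t * c) - 1) / c * a i) := by
        gcongr
        exact hmgf.trans (prod_one_add_le_exp_sum _ fun i ↦ mul_nonneg hslope (ha i))
    _ = exp (-t * ε + (exp (t * c) - 1) / c * ∑ i ∈ range n, a i) := by
        rw [← exp_add, mul_sum]

end

/-- multiplicative Azuma inequality for supermartingale-like
sums: if each `X i` takes values in `[0, c]` and
`E[X i | X 0, …, X (i-1)] ≤ a i` a.s., then with `μ = ∑ a i`, for every
`δ > 0`, `Pr[∑ X i ≥ (1+δ)μ] ≤ exp(-δ²μ/((2+δ)c))`. -/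
theorem multiplicative_azuma {Ω : Type*} [MeasureSpace Ω]
    [IsProbabilityMeasure (volume : Measure Ω)]
    (n : ℕ) (X : ℕ → Ω → ℝ) (hXm : ∀ i, Measurable (X i))
    (c : ℝ) (hc : 0 < c) (hbdd : ∀ i, ∀ ω, X i ω ∈ Set.Icc 0 c)
    (a : ℕ → ℝ) (ha : ∀ i, 0 ≤ a i)
    (hcond : ∀ i < n, ∀ᵐ ω ∂(volume : Measure Ω),
      MeasureTheory.condExp
        (⨆ j ∈ Finset.range i, MeasurableSpace.comap (X j) inferInstance)
        (volume : Measure Ω) (X i) ω ≤ a i)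
    (μ : ℝ) (hμ : μ = ∑ i ∈ Finset.range n, a i) (δ : ℝ) (hδ : 0 < δ) :
    (volume : Measure Ω) {ω | (1 + δ) * μ ≤ ∑ i ∈ Finset.range n, X i ω} ≤
      ENNReal.ofReal (Real.exp (-(δ ^ 2 * μ) / ((2 + δ) * c))) := by
  have hF : ∀ i, ⨆ j ∈ range i, MeasurableSpace.comap (X j) inferInstance ≤
      MeasureSpace.toMeasurableSpace := fun i ↦ iSup₂_le fun j _ ↦ (hXm j).comap_le
  have hXF : ∀ i, ∀ j < i,
      Measurable[⨆ j ∈ range i, MeasurableSpace.comap (X j) inferInstance] (X j) :=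
    fun i j hj ↦ measurable_iff_comap_le.2
      (le_biSup (fun j ↦ MeasurableSpace.comap (X j) inferInstance) (mem_range.2 hj))
  have hμ0 : 0 ≤ μ := hμ ▸ sum_nonneg fun i _ ↦ ha i
  have ht : 0 ≤ log (1 + δ) / c := div_nonneg (log_nonneg (by linarith)) hc.le
  rw [← ofReal_measureReal]
  refine ENNReal.ofReal_le_ofReal ((measureReal_sum_ge_le_exp_of_condExp_le hF hXm hXF hc hbdd
    ha hcond ht ((1 + δ) * μ)).trans ?_)
  rw [← hμ, div_mul_cancel₀ _ hc.ne', exp_log (by linarith), exp_le_exp]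
  calc -(log (1 + δ) / c) * ((1 + δ) * μ) + (1 + δ - 1) / c * μ
      = μ / c * (δ - (1 + δ) * log (1 + δ)) := by ring
    _ ≤ μ / c * -(δ ^ 2 / (2 + δ)) := by gcongr; exact sub_mul_log_one_add_le hδ.le
    _ = -(δ ^ 2 * μ) / ((2 + δ) * c) := by field_simp
end

section
/- Let φ be a proper q-edge-coloring of all but one edge x y of a graph G with q ≥ Δ(G)+1, where x y is uncolored. If α is a color missing at both the pivot x and the last fan vertex y_{k−1} of a fan F = (x, y_0 = y, …, y_{k−1}), then after shifting F the edge x y_{k−1} is uncolored and α remains missing at both x and y_{k−1}; hence assigning α to x y_{k−1} yields a proper partial coloring whose domain has one more edge than the domain of φ. -/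
section

variable {V : Type*} {G : SimpleGraph V} {q : ℕ} {φ ψ : Sym2 V → Option (Fin q)}

theorem ProperPartial.apply_mk_ne {x v w : V} {c : Fin q} (hφ : ProperPartial G φ)
    (hv : G.Adj x v) (hw : G.Adj x w) (hvw : v ≠ w) (hc : φ s(x, v) = some c) :
    φ s(x, w) ≠ some c := by
  rw [← hc]
  exact (hφ _ hv _ hw (by rwa [Ne, Sym2.congr_right]) ⟨x, Sym2.mem_mk_left _ _,
    Sym2.mem_mk_left _ _⟩ (by simp [hc])).symm

theorem ProperPartial.of_eqOn_compl {S : Set (Sym2 V)} (hφ : ProperPartial G φ)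
    (hψ : Set.EqOn ψ φ Sᶜ)
    (hS : ∀ e ∈ S, ∀ f ∈ G.edgeSet, e ≠ f → (∃ v, v ∈ e ∧ v ∈ f) → ψ e ≠ ψ f) :
    ProperPartial G ψ := by
  intro e he f hf hne hshare hcol
  by_cases heS : e ∈ S
  · exact hS e heS f hf hne hshare
  by_cases hfS : f ∈ S
  · obtain ⟨v, hve, hvf⟩ := hshare
    exact (hS f hfS e he hne.symm ⟨v, hvf, hve⟩).symm
  rw [hψ heS] at hcol ⊢
  rw [hψ hfS]
  exact hφ e he f hf hne hshare hcol

theorem ncard_sep_ne_none_eq_add_one [Finite V] {e₀ : Sym2 V} (he₀ : e₀ ∈ G.edgeSet)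
    (hφe₀ : φ e₀ = none) (hφ : ∀ e ∈ G.edgeSet, e ≠ e₀ → φ e ≠ none)
    (hψ : ∀ e ∈ G.edgeSet, ψ e ≠ none) :
    {e ∈ G.edgeSet | ψ e ≠ none}.ncard = {e ∈ G.edgeSet | φ e ≠ none}.ncard + 1 := by
  have hφ' : {e ∈ G.edgeSet | φ e ≠ none} = G.edgeSet \ {e₀} := by
    ext e
    simp only [Set.mem_sep_iff, Set.mem_sdiff, Set.mem_singleton_iff]
    exact ⟨fun ⟨he, hc⟩ => ⟨he, by rintro rfl; exact hc hφe₀⟩,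
      fun ⟨he, hne⟩ => ⟨he, hφ e he hne⟩⟩
  rw [Set.sep_eq_self_iff_mem_true.mpr hψ, hφ', Set.ncard_sdiff_singleton_add_one he₀]

structure IsFan (G : SimpleGraph V) (φ : Sym2 V → Option (Fin q)) (x : V) (k : ℕ)
    (y : ℕ → V) : Prop where
  injOn : ∀ i < k, ∀ j < k, y i = y j → i = j
  adj : ∀ i < k, G.Adj x (y i)
  blank : φ s(x, y 0) = none
  color_missing : ∀ i, 1 ≤ i → i < k → ∃ c : Fin q,
    φ s(x, y i) = some c ∧ MissingAt G φ (y (i - 1)) c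

structure IsShiftAndColor (φ ψ : Sym2 V → Option (Fin q)) (x : V) (k : ℕ) (y : ℕ → V)
    (α : Fin q) : Prop where
  shift : ∀ i, i < k - 1 → ψ s(x, y i) = φ s(x, y (i + 1))
  last : ψ s(x, y (k - 1)) = some α
  eqOn : ∀ e : Sym2 V, (∀ i < k, e ≠ s(x, y i)) → ψ e = φ e

namespace IsShiftAndColor

variable {x : V} {k : ℕ} {y : ℕ → V} {α : Fin q}

theorem apply_eq_of_notMem (hs : IsShiftAndColor φ ψ x k y α) {f : Sym2 V} (hxf : x ∉ f) :
    ψ f = φ f :=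
  hs.eqOn f fun _ _ h => hxf (h ▸ Sym2.mem_mk_left _ _)

theorem exists_color (hF : IsFan G φ x k y) (hs : IsShiftAndColor φ ψ x k y α)
    (hαx : MissingAt G φ x α) (hαy : MissingAt G φ (y (k - 1)) α) {i : ℕ} (hi : i < k) :
    ∃ c, ψ s(x, y i) = some c ∧ MissingAt G φ (y i) c ∧
      (i + 1 < k ∧ φ s(x, y (i + 1)) = some c ∨ i + 1 = k ∧ MissingAt G φ x c) := by
  rcases Nat.lt_or_ge (i + 1) k with h | h
  · obtain ⟨c, hc, hmiss⟩ := hF.color_missing (i + 1) (by omega) h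
    exact ⟨c, by rw [hs.shift i (by omega), hc], by simpa using hmiss, .inl ⟨h, hc⟩⟩
  · obtain rfl : i = k - 1 := by omega
    exact ⟨α, hs.last, hαy, .inr ⟨by omega, hαx⟩⟩

theorem apply_ne_of_adj_pivot (hφ : ProperPartial G φ) (hF : IsFan G φ x k y)
    (hs : IsShiftAndColor φ ψ x k y α) (hαx : MissingAt G φ x α)
    (hαy : MissingAt G φ (y (k - 1)) α) {i : ℕ} {w : V} (hi : i < k) (hw : G.Adj x w)
    (hwi : w ≠ y i) : ψ s(x, y i) ≠ ψ s(x, w) := by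
  obtain ⟨c, hc, -, hci⟩ := hs.exists_color hF hαx hαy hi
  rw [hc]
  by_cases hwF : ∃ j < k, w = y j
  · obtain ⟨j, hj, rfl⟩ := hwF
    have hij : i ≠ j := by rintro rfl; exact hwi rfl
    obtain ⟨d, hd, -, hdj⟩ := hs.exists_color hF hαx hαy hj
    rw [hd, Ne, Option.some_inj]
    rcases hci with ⟨hi1, hc'⟩ | ⟨hi1, hcx⟩ <;> rcases hdj with ⟨hj1, hd'⟩ | ⟨hj1, hdx⟩
    · rintro rfl
      have hyy : y (i + 1) ≠ y (j + 1) := fun h => hij (by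
        have := hF.injOn _ hi1 _ hj1 h; omega)
      exact hφ.apply_mk_ne (hF.adj _ hi1) (hF.adj _ hj1) hyy hc' hd'
    · rintro rfl; exact hdx _ (hF.adj _ hi1) hc'
    · rintro rfl; exact hcx _ (hF.adj _ hj1) hd'
    · omega
  · push Not at hwF
    rw [hs.eqOn _ fun j hj => by rw [Ne, Sym2.congr_right]; exact hwF j hj]
    rcases hci with ⟨hi1, hc'⟩ | ⟨-, hcx⟩
    · exact Ne.symm <| hφ.apply_mk_ne (hF.adj _ hi1) hw (hwF _ hi1).symm hc'
    · exact fun h => hcx w hw h.symm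

theorem properPartial (hφ : ProperPartial G φ) (hF : IsFan G φ x k y)
    (hs : IsShiftAndColor φ ψ x k y α) (hαx : MissingAt G φ x α)
    (hαy : MissingAt G φ (y (k - 1)) α) : ProperPartial G ψ := by
  refine hφ.of_eqOn_compl (S := {e | ∃ i < k, e = s(x, y i)})
    (fun e he => hs.eqOn e fun i hi h => he ⟨i, hi, h⟩) ?_
  rintro _ ⟨i, hi, rfl⟩ f hf hne ⟨v, hv, hvf⟩
  obtain ⟨w, rfl⟩ := Sym2.mem_iff_exists.mp hvf
  rcases Sym2.mem_iff.mp hv with rfl | rfl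
  · exact hs.apply_ne_of_adj_pivot hφ hF hαx hαy hi hf (by rintro rfl; exact hne rfl)
  · have hwx : w ≠ x := by rintro rfl; exact hne Sym2.eq_swap
    have hxf : x ∉ s(y i, w) := by simp [Sym2.mem_iff, (hF.adj i hi).ne, hwx.symm]
    obtain ⟨c, hc, hcy, -⟩ := hs.exists_color hF hαx hαy hi
    rw [hc, hs.apply_eq_of_notMem hxf]
    exact fun h => hcy w hf h.symm

theorem ne_none_of_mem_edgeSet (hF : IsFan G φ x k y) (hs : IsShiftAndColor φ ψ x k y α)
    (hαx : MissingAt G φ x α) (hαy : MissingAt G φ (y (k - 1)) α) (hk : 0 < k)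
    (hcol : ∀ e ∈ G.edgeSet, e ≠ s(x, y 0) → φ e ≠ none) {e : Sym2 V} (he : e ∈ G.edgeSet) :
    ψ e ≠ none := by
  by_cases heF : ∃ i < k, e = s(x, y i)
  · obtain ⟨i, hi, rfl⟩ := heF
    obtain ⟨c, hc, -⟩ := hs.exists_color hF hαx hαy hi
    simp [hc]
  · push Not at heF
    rw [hs.eqOn e heF]
    exact hcol e he (heF 0 hk)

end IsShiftAndColor

end

theorem shift_fan_and_color_general {V : Type*} [Fintype V]
    (G : SimpleGraph V) (q : ℕ)
    (φ ψ : Sym2 V → Option (Fin q)) (hφ : ProperPartial G φ)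
    (x : V) (k : ℕ) (hk : 0 < k) (y : ℕ → V)
    (hinj : ∀ i < k, ∀ j < k, y i = y j → i = j)
    (hadj : ∀ i < k, G.Adj x (y i))
    (hblank : φ s(x, y 0) = none)
    (hcol : ∀ e ∈ G.edgeSet, e ≠ s(x, y 0) → φ e ≠ none)
    (hfan : ∀ i, 1 ≤ i → i < k → ∃ c : Fin q,
      φ s(x, y i) = some c ∧ MissingAt G φ (y (i - 1)) c)
    (α : Fin q) (hαx : MissingAt G φ x α) (hαy : MissingAt G φ (y (k - 1)) α)
    (hψ₁ : ∀ i, i < k - 1 → ψ s(x, y i) = φ s(x, y (i + 1)))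
    (hψ₂ : ψ s(x, y (k - 1)) = some α)
    (hψ₃ : ∀ e : Sym2 V, (∀ i < k, e ≠ s(x, y i)) → ψ e = φ e) :
    ProperPartial G ψ ∧
      {e ∈ G.edgeSet | ψ e ≠ none}.ncard =
        {e ∈ G.edgeSet | φ e ≠ none}.ncard + 1 := by
  have hF : IsFan G φ x k y := ⟨hinj, hadj, hblank, hfan⟩
  have hs : IsShiftAndColor φ ψ x k y α := ⟨hψ₁, hψ₂, hψ₃⟩
  exact ⟨hs.properPartial hφ hF hαx hαy, ncard_sep_ne_none_eq_add_one (hadj 0 hk) hblank hcol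
    fun _ he => hs.ne_none_of_mem_edgeSet hF hαx hαy hk hcol he⟩

/-- if `φ` properly colors all edges but the uncolored edge
`x y₀`, `q ≥ Δ + 1`, and `α` is missing at both the pivot `x` and the last fan
vertex `y (k-1)`, then shifting the fan and assigning `α` to `x y (k-1)` gives
a proper partial coloring whose domain has exactly one more edge. -/
theorem shift_fan_and_color {V : Type*} [Fintype V] [DecidableEq V]
    (G : SimpleGraph V) [DecidableRel G.Adj] (q Δ : ℕ)
    (hΔ : ∀ v, G.degree v ≤ Δ) (hqΔ : Δ + 1 ≤ q)
    (φ ψ : Sym2 V → Option (Fin q)) (hφ : ProperPartial G φ)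
    (x : V) (k : ℕ) (hk : 0 < k) (y : ℕ → V)
    (hinj : ∀ i < k, ∀ j < k, y i = y j → i = j)
    (hadj : ∀ i < k, G.Adj x (y i))
    (hblank : φ s(x, y 0) = none)
    (hcol : ∀ e ∈ G.edgeSet, e ≠ s(x, y 0) → φ e ≠ none)
    (hfan : ∀ i, 1 ≤ i → i < k → ∃ c : Fin q,
      φ s(x, y i) = some c ∧ MissingAt G φ (y (i - 1)) c)
    (α : Fin q) (hαx : MissingAt G φ x α) (hαy : MissingAt G φ (y (k - 1)) α)
    (hψ₁ : ∀ i, i < k - 1 → ψ s(x, y i) = φ s(x, y (i + 1)))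
    (hψ₂ : ψ s(x, y (k - 1)) = some α)
    (hψ₃ : ∀ e : Sym2 V, (∀ i < k, e ≠ s(x, y i)) → ψ e = φ e) :
    ProperPartial G ψ ∧
      {e ∈ G.edgeSet | ψ e ≠ none}.ncard =
        {e ∈ G.edgeSet | φ e ≠ none}.ncard + 1 :=
  shift_fan_and_color_general G q φ ψ hφ x k hk y hinj hadj hblank hcol hfan α hαx hαy hψ₁ hψ₂ hψ₃
end

section
/- Flipping a maximal αβ-alternating path P in a proper partial coloring changes the missing sets only at the two endpoints of P: for every vertex v not an endpoint of P, the set of missing colors of v after the flip equals the set of missing colors of v before the flip. -/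
/-- The set of colors missing at `v` under `φ`. -/
def MissingSet {V : Type*} (G : SimpleGraph V) {q : ℕ}
    (φ : Sym2 V → Option (Fin q)) (v : V) : Set (Fin q) :=
  {c | ∀ w, G.Adj v w → φ s(v, w) ≠ some c}

/-- `(p 0, …, p k)` is an `αβ`-alternating path. -/
def AltPath {V : Type*} (G : SimpleGraph V) {q : ℕ}
    (φ : Sym2 V → Option (Fin q)) (α β : Fin q) (k : ℕ) (p : ℕ → V) : Prop :=
  (∀ i ≤ k, ∀ j ≤ k, p i = p j → i = j) ∧
  (∀ i < k, G.Adj (p i) (p (i + 1))) ∧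
  (∀ i < k, φ s(p i, p (i + 1)) = some (if i % 2 = 0 then α else β))

/-- Maximality: the path cannot be extended at either end. -/
def MaxAltPath {V : Type*} (G : SimpleGraph V) {q : ℕ}
    (φ : Sym2 V → Option (Fin q)) (α β : Fin q) (k : ℕ) (p : ℕ → V) : Prop :=
  AltPath G φ α β k p ∧
  (∀ w, G.Adj (p 0) w → φ s(p 0, w) ≠ some β) ∧
  (∀ w, G.Adj (p k) w → φ s(p k, w) ≠ some (if k % 2 = 0 then α else β))

/- Flipping recolours only path edges. A vertex `v` other than the endpoints that lies on a path
edge is interior to the path, so it meets a second path edge whose colour before the flip is the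
colour of the first one after the flip. Hence every colour seen at `v` after the flip was seen
before it, and the situation is symmetric in the two colourings. -/

theorem flip_color_eq_succ {C : Type*} (α β : C) (i : ℕ) :
    (if i % 2 = 0 then β else α) = if (i + 1) % 2 = 0 then α else β := by
  rcases Nat.mod_two_eq_zero_or_one i with h | h <;> simp [h, Nat.succ_mod_two_eq_zero_iff]

theorem flip_color_succ_eq {C : Type*} (α β : C) (i : ℕ) :
    (if (i + 1) % 2 = 0 then β else α) = if i % 2 = 0 then α else β := by
  rcases Nat.mod_two_eq_zero_or_one i with h | h <;> simp [h, Nat.succ_mod_two_eq_zero_iff]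

section Flip

variable {V : Type*} {G : SimpleGraph V} {q : ℕ} {φ ψ : Sym2 V → Option (Fin q)} {α β : Fin q}
  {k : ℕ} {p : ℕ → V}

theorem exists_adj_color_eq_of_flip (hadj : ∀ i < k, G.Adj (p i) (p (i + 1)))
    (hφ : ∀ i < k, φ s(p i, p (i + 1)) = some (if i % 2 = 0 then α else β))
    (hψ : ∀ i < k, ψ s(p i, p (i + 1)) = some (if i % 2 = 0 then β else α))
    {v w : V} (hv0 : v ≠ p 0) (hvk : v ≠ p k) {i : ℕ} (hi : i < k)
    (hvw : s(v, w) = s(p i, p (i + 1))) :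
    ∃ u, G.Adj v u ∧ φ s(v, u) = ψ s(v, w) := by
  rcases Sym2.eq_iff.mp hvw with ⟨rfl, rfl⟩ | ⟨rfl, rfl⟩
  · obtain ⟨j, rfl⟩ : ∃ j, i = j + 1 := Nat.exists_eq_succ_of_ne_zero (by rintro rfl; exact hv0 rfl)
    refine ⟨p j, (hadj j (by omega)).symm, ?_⟩
    rw [Sym2.eq_swap, hφ j (by omega), hψ (j + 1) hi, flip_color_succ_eq α β j]
  · have hi' : i + 1 < k := Nat.lt_of_le_of_ne hi fun h => hvk (congrArg p h)
    refine ⟨p (i + 2), hadj (i + 1) hi', ?_⟩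
    rw [hφ (i + 1) hi', Sym2.eq_swap, hψ i hi, flip_color_eq_succ α β i]

theorem missingSet_subset_of_flip (hadj : ∀ i < k, G.Adj (p i) (p (i + 1)))
    (hφ : ∀ i < k, φ s(p i, p (i + 1)) = some (if i % 2 = 0 then α else β))
    (hψ : ∀ i < k, ψ s(p i, p (i + 1)) = some (if i % 2 = 0 then β else α))
    (hoff : ∀ e : Sym2 V, (∀ i < k, e ≠ s(p i, p (i + 1))) → ψ e = φ e)
    {v : V} (hv0 : v ≠ p 0) (hvk : v ≠ p k) :
    MissingSet G φ v ⊆ MissingSet G ψ v := by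
  intro c hc w hvw hψc
  by_cases hpath : ∃ i < k, s(v, w) = s(p i, p (i + 1))
  · obtain ⟨i, hi, he⟩ := hpath
    obtain ⟨u, hvu, hu⟩ := exists_adj_color_eq_of_flip hadj hφ hψ hv0 hvk hi he
    exact hc u hvu (hu.trans hψc)
  · push Not at hpath
    exact hc w hvw (hoff _ hpath ▸ hψc)

end Flip

theorem flip_path_missing_sets_general {V : Type*} (G : SimpleGraph V) (q : ℕ)
    (φ ψ : Sym2 V → Option (Fin q))
    (α β : Fin q) (k : ℕ) (p : ℕ → V)
    (hP : MaxAltPath G φ α β k p)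
    (hψ₁ : ∀ i < k, ψ s(p i, p (i + 1)) = some (if i % 2 = 0 then β else α))
    (hψ₂ : ∀ e : Sym2 V, (∀ i < k, e ≠ s(p i, p (i + 1))) → ψ e = φ e) :
    ∀ v : V, v ≠ p 0 → v ≠ p k →
      MissingSet G ψ v = MissingSet G φ v := by
  obtain ⟨⟨-, hadj, hφ₁⟩, -⟩ := hP
  intro v hv0 hvk
  exact (missingSet_subset_of_flip hadj hψ₁ hφ₁ (fun e he => (hψ₂ e he).symm) hv0 hvk).antisymm
    (missingSet_subset_of_flip hadj hφ₁ hψ₁ hψ₂ hv0 hvk)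

/-- flipping a maximal `αβ`-alternating path changes the
missing sets only at its two endpoints. -/
theorem flip_path_missing_sets {V : Type*} (G : SimpleGraph V) (q : ℕ)
    (φ ψ : Sym2 V → Option (Fin q)) (hφ : ProperPartial G φ)
    (α β : Fin q) (hαβ : α ≠ β) (k : ℕ) (p : ℕ → V)
    (hP : MaxAltPath G φ α β k p)
    (hψ₁ : ∀ i < k, ψ s(p i, p (i + 1)) = some (if i % 2 = 0 then β else α))
    (hψ₂ : ∀ e : Sym2 V, (∀ i < k, e ≠ s(p i, p (i + 1))) → ψ e = φ e) :
    ∀ v : V, v ≠ p 0 → v ≠ p k →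
      MissingSet G ψ v = MissingSet G φ v :=
  flip_path_missing_sets_general G q φ ψ α β k p hP hψ₁ hψ₂
end
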